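/- arXiv:2507.06552 — 3 statements merged into one kernel-verified Lean document; each statement's English description precedes it below -/
import Mathlib

section
/- Suppose |𝒴| = k > 2. For every learner 𝒜, every probability mass function q on 𝒳, and every (m,n)-sample s with positive probability under π, the sample-wise risk is lower-bounded by the Posterior Target Label Uncertainty: e(𝒜; s, q) ≥ (U(s, q) − 1) / log₂(k − 1). -/
open Finset
open scoped Classical BigOperators

noncomputable section

/-- A UDA class over input space `X` and label space `Y`: a finitely supported
probability distribution `π` over triples `(p, q, f)`, where `p` and `q` are
probability mass functions on `X` and `f : X → Y` is a classifier. -/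
structure UDAClass (X Y : Type*) [Fintype X] where
  supp : Finset ((X → ℝ) × (X → ℝ) × (X → Y))
  w : ((X → ℝ) × (X → ℝ) × (X → Y)) → ℝ
  w_nonneg : ∀ t, 0 ≤ w t
  w_eq_zero : ∀ t ∉ supp, w t = 0
  w_sum : ∑ t ∈ supp, w t = 1
  p_nonneg : ∀ t ∈ supp, ∀ x, 0 ≤ t.1 x
  p_sum : ∀ t ∈ supp, ∑ x, t.1 x = 1
  q_nonneg : ∀ t ∈ supp, ∀ x, 0 ≤ t.2.1 x
  q_sum : ∀ t ∈ supp, ∑ x, t.2.1 x = 1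

variable {X Y : Type*} [Fintype X] [Fintype Y] [DecidableEq X] [DecidableEq Y]

/-- An `(m,n)`-sample `s = (x_s, x_t, y_s)`. -/
abbrev Sample (X Y : Type*) (m n : ℕ) := (Fin m → X) × (Fin n → X) × (Fin m → Y)

/-- The i.i.d. probability `p^m(xs) = ∏ i, p (xs i)` of a vector. -/
def iidProb {m : ℕ} (p : X → ℝ) (xs : Fin m → X) : ℝ := ∏ i, p (xs i)

/-- The normalizing constant `Z(s)`. -/
def Zval (π : UDAClass X Y) {m n : ℕ} (s : Sample X Y m n) : ℝ :=
  ∑ t ∈ π.supp, π.w t * iidProb t.1 s.1 * iidProb t.2.1 s.2.1 *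
    (if ∀ i, t.2.2 (s.1 i) = s.2.2 i then 1 else 0)

/-- The posterior over classifiers `ρ(f' | s)`. -/
def post (π : UDAClass X Y) {m n : ℕ} (s : Sample X Y m n) (f' : X → Y) : ℝ :=
  (∑ t ∈ π.supp, π.w t * iidProb t.1 s.1 * iidProb t.2.1 s.2.1 *
      (if t.2.2 = f' then 1 else 0) * (if ∀ i, f' (s.1 i) = s.2.2 i then 1 else 0))
    / Zval π s

/-- The aggregated soft classifier `ρ^A(y | x, s)`. -/
def postA (π : UDAClass X Y) {m n : ℕ} (s : Sample X Y m n) (x : X) (y : Y) : ℝ :=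
  ∑ f' : X → Y, post π s f' * (if f' x = y then 1 else 0)

/-- The target-domain risk `R(g | q, f)`. -/
def risk (g : X → Y) (q : X → ℝ) (f : X → Y) : ℝ :=
  ∑ x, q x * (if g x ≠ f x then 1 else 0)

/-- A learner assigns a probability distribution over classifiers to each sample. -/
def IsLearner {m n : ℕ} (A : Sample X Y m n → (X → Y) → ℝ) : Prop :=
  ∀ s, (∀ g, 0 ≤ A s g) ∧ ∑ g : X → Y, A s g = 1

/-- The sample-wise risk `e(𝒜; s, q)`. -/
def swRisk (π : UDAClass X Y) {m n : ℕ} (A : Sample X Y m n → (X → Y) → ℝ)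
    (s : Sample X Y m n) (q : X → ℝ) : ℝ :=
  ∑ x, q x * ∑ f' : X → Y, ∑ g : X → Y,
    post π s f' * A s g * (if f' x ≠ g x then 1 else 0)

/-- The optimal sample-wise risk `e*(s, q)`: the minimum of `e(𝒜; s, q)` over learners. -/
def eStar (π : UDAClass X Y) {m n : ℕ} (s : Sample X Y m n) (q : X → ℝ) : ℝ :=
  sInf {r : ℝ | ∃ A : Sample X Y m n → (X → Y) → ℝ, IsLearner A ∧ swRisk π A s q = r}

/-- Base-2 Shannon entropy of a distribution on a finite set. -/
def entropy2 {Z : Type*} [Fintype Z] (μ : Z → ℝ) : ℝ :=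
  -∑ z, μ z * Real.logb 2 (μ z)

/-- The Posterior Target Label Uncertainty `U(s, q)`. -/
def PTLU (π : UDAClass X Y) {m n : ℕ} (s : Sample X Y m n) (q : X → ℝ) : ℝ :=
  ∑ x, q x * entropy2 (fun y => postA π s x y)

/-- The Empirical Posterior Target Label Uncertainty `Ũ(s)`. -/
def EPTLU (π : UDAClass X Y) {m n : ℕ} (s : Sample X Y m n) : ℝ :=
  (1 / (n : ℝ)) * ∑ i : Fin n, entropy2 (fun y => postA π s (s.2.1 i) y)

/-- The conditional distribution `π_{F|P,Q}(f' | p, q)`. -/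
def condF (π : UDAClass X Y) (p q : X → ℝ) (f' : X → Y) : ℝ :=
  π.w (p, q, f') / ∑ f'' : X → Y, π.w (p, q, f'')

/-- The posterior over classifiers given the infinite-sample observation `(p, q, f_p)`. -/
def postInf (π : UDAClass X Y) (p q : X → ℝ) (f f' : X → Y) : ℝ :=
  (condF π p q f' * (if ∀ x, p x ≠ 0 → f' x = f x then 1 else 0)) /
    ∑ f'' : X → Y, condF π p q f'' * (if ∀ x, p x ≠ 0 → f'' x = f x then 1 else 0)

/-- Aggregation `ρ^A(y | x, p, q, f_p)` of the infinite-sample posterior. -/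
def postAInf (π : UDAClass X Y) (p q : X → ℝ) (f : X → Y) (x : X) (y : Y) : ℝ :=
  ∑ f' : X → Y, postInf π p q f f' * (if f' x = y then 1 else 0)

/-- The restriction `f_p` of a classifier `f` to the support of `p`. -/
def restrictSupp (p : X → ℝ) (f : X → Y) : {x : X // p x ≠ 0} → Y := fun x => f x.1

/-- An infinite-sample learner: maps each observation `(p, q, f_p)` to a
distribution over classifiers. -/
abbrev InfLearner (X Y : Type*) :=
  (p : X → ℝ) → (X → ℝ) → ({x : X // p x ≠ 0} → Y) → ((X → Y) → ℝ)

def IsInfLearner (A : InfLearner X Y) : Prop :=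
  ∀ p q fp, (∀ g, 0 ≤ A p q fp g) ∧ ∑ g : X → Y, A p q fp g = 1

/-- The sample-wise risk `e(𝒜_∞; p, q, f_p)` of an infinite-sample learner. -/
def swRiskInf (π : UDAClass X Y) (A : InfLearner X Y) (p q : X → ℝ) (f : X → Y) : ℝ :=
  ∑ x, q x * ∑ f' : X → Y, ∑ g : X → Y,
    postInf π p q f f' * A p q (restrictSupp p f) g * (if f' x ≠ g x then 1 else 0)

/-- The optimal sample-wise risk `e*(p, q, f_p)` on an infinite-sample observation. -/
def eStarInf (π : UDAClass X Y) (p q : X → ℝ) (f : X → Y) : ℝ :=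
  sInf {r : ℝ | ∃ A : InfLearner X Y, IsInfLearner A ∧ swRiskInf π A p q f = r}

/-- The PTLU `U(p, q, f_p)` on an infinite-sample observation. -/
def PTLUInf (π : UDAClass X Y) (p q : X → ℝ) (f : X → Y) : ℝ :=
  ∑ x, q x * entropy2 (fun y => postAInf π p q f x y)

/-- The expected target-domain risk `R(𝒜 | p, q, f)`. -/
def expRisk {m n : ℕ} (A : Sample X Y m n → (X → Y) → ℝ) (p q : X → ℝ) (f : X → Y) : ℝ :=
  ∑ xs : Fin m → X, ∑ xt : Fin n → X,
    iidProb p xs * iidProb q xt * ∑ g : X → Y, A (xs, xt, fun i => f (xs i)) g * risk g q f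

/-- The overall target-domain risk `R(𝒜)`. -/
def overallRisk (π : UDAClass X Y) {m n : ℕ} (A : Sample X Y m n → (X → Y) → ℝ) : ℝ :=
  ∑ t ∈ π.supp, π.w t * expRisk A t.1 t.2.1 t.2.2

/-- The overall target-domain risk `R(𝒜_∞)` of an infinite-sample learner. -/
def overallRiskInf (π : UDAClass X Y) (A : InfLearner X Y) : ℝ :=
  ∑ t ∈ π.supp, π.w t *
    ∑ g : X → Y, A t.1 t.2.1 (restrictSupp t.1 t.2.2) g * risk g t.2.1 t.2.2


lemma gibbs_aux {Z : Type*} [Fintype Z] (μ r : Z → ℝ) (hμ0 : ∀ z, 0 ≤ μ z)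
    (hμ1 : ∑ z, μ z = 1) (hr : ∀ z, 0 < r z) (hr1 : ∑ z, r z ≤ 1) :
    entropy2 μ ≤ -∑ z, μ z * Real.logb 2 (r z) := by
  have hlog2 : (0:ℝ) < Real.log 2 := Real.log_pos one_lt_two
  have key : ∀ z, μ z * Real.logb 2 (r z) - μ z * Real.logb 2 (μ z)
      ≤ (r z - μ z) / Real.log 2 := by
    intro z
    rcases eq_or_lt_of_le (hμ0 z) with h | h
    · rw [← h]
      simp only [zero_mul, sub_zero, sub_self]
      exact div_nonneg (by linarith [hr z]) hlog2.le
    · have h1 : Real.log (r z / μ z) ≤ r z / μ z - 1 :=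
        Real.log_le_sub_one_of_pos (div_pos (hr z) h)
      rw [Real.log_div (hr z).ne' h.ne'] at h1
      have h2 : μ z * (Real.log (r z) - Real.log (μ z)) ≤ r z - μ z := by
        calc μ z * (Real.log (r z) - Real.log (μ z)) ≤ μ z * (r z / μ z - 1) :=
              mul_le_mul_of_nonneg_left h1 h.le
          _ = r z - μ z := by field_simp
      have h3 : μ z * Real.logb 2 (r z) - μ z * Real.logb 2 (μ z)
          = (μ z * (Real.log (r z) - Real.log (μ z))) / Real.log 2 := by
        rw [Real.logb, Real.logb]; ring
      rw [h3]
      gcongr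
  have hsum := Finset.sum_le_sum (fun z (_ : z ∈ Finset.univ) => key z)
  rw [Finset.sum_sub_distrib, ← Finset.sum_div, Finset.sum_sub_distrib, hμ1] at hsum
  have h2 : (∑ z, r z - 1) / Real.log 2 ≤ 0 :=
    div_nonpos_of_nonpos_of_nonneg (by linarith) hlog2.le
  unfold entropy2
  linarith

lemma fano_aux {Y : Type*} [Fintype Y] [DecidableEq Y] (hk : 2 < Fintype.card Y)
    (μ : Y → ℝ) (hμ0 : ∀ y, 0 ≤ μ y) (hμ1 : ∑ y, μ y = 1) (y0 : Y) :
    entropy2 μ ≤ 1 + (1 - μ y0) * Real.logb 2 ((Fintype.card Y : ℝ) - 1) := by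
  set K : ℝ := (Fintype.card Y : ℝ) - 1 with hK
  set L : ℝ := Real.logb 2 K with hL
  have hK2 : (2:ℝ) ≤ K := by
    have h3 : (3:ℝ) ≤ (Fintype.card Y : ℝ) := by exact_mod_cast hk
    simp only [hK]; linarith
  have hKpos : (0:ℝ) < K := by linarith
  have hmain := gibbs_aux μ (fun y => if y = y0 then 1/2 else 1/(2*K)) hμ0 hμ1
    (fun y => by split_ifs <;> positivity)
    (by
      have : ∀ z : Y, (if z = y0 then (1:ℝ)/2 else 1/(2*K))
          = 1/(2*K) + (if z = y0 then 1/2 - 1/(2*K) else 0) := by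
        intro z; split_ifs <;> ring
      simp only [this]
      rw [Finset.sum_add_distrib, Finset.sum_const, Finset.card_univ, nsmul_eq_mul,
        Finset.sum_ite_eq' Finset.univ y0 (fun _ => (1:ℝ)/2 - 1/(2*K))]
      simp only [Finset.mem_univ, if_true]
      have : (Fintype.card Y : ℝ) = K + 1 := by simp [hK]
      rw [this]
      rw [show (K+1)*(1/(2*K)) + (1/2 - 1/(2*K)) = 1 from by field_simp; ring])
  have hval : ∀ y : Y, Real.logb 2 (if y = y0 then (1:ℝ)/2 else 1/(2*K))
      = if y = y0 then (-1 : ℝ) else -(1 + L) := by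
    intro y
    split_ifs
    · rw [one_div, Real.logb_inv, Real.logb_self_eq_one one_lt_two]
    · rw [one_div, Real.logb_inv, Real.logb_mul (by norm_num) hKpos.ne',
        Real.logb_self_eq_one one_lt_two]
  have hsum : -∑ y, μ y * Real.logb 2 (if y = y0 then (1:ℝ)/2 else 1/(2*K))
      = 1 + (1 - μ y0) * L := by
    have step : ∀ y : Y, μ y * Real.logb 2 (if y = y0 then (1:ℝ)/2 else 1/(2*K))
        = -(μ y + μ y * L - (if y = y0 then μ y * L else 0)) := by
      intro y
      rw [hval y]
      split_ifs <;> ring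
    simp only [step]
    rw [Finset.sum_neg_distrib, neg_neg]
    rw [Finset.sum_sub_distrib, Finset.sum_add_distrib, hμ1, ← Finset.sum_mul, hμ1,
      Finset.sum_ite_eq' Finset.univ y0 (fun y => μ y * L)]
    simp only [Finset.mem_univ, if_true]
    ring
  calc entropy2 μ ≤ -∑ y, μ y * Real.logb 2 (if y = y0 then (1:ℝ)/2 else 1/(2*K)) := hmain
    _ = 1 + (1 - μ y0) * L := hsum

lemma post_nonneg_aux (π : UDAClass X Y) {m n : ℕ} (s : Sample X Y m n)
    (hZ : 0 < Zval π s) (f' : X → Y) : 0 ≤ post π s f' := by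
  apply div_nonneg _ hZ.le
  refine Finset.sum_nonneg fun t ht => ?_
  have h1 : 0 ≤ iidProb t.1 s.1 := Finset.prod_nonneg fun i _ => π.p_nonneg t ht _
  have h2 : 0 ≤ iidProb t.2.1 s.2.1 := Finset.prod_nonneg fun i _ => π.q_nonneg t ht _
  have h0 := π.w_nonneg t
  split_ifs <;> positivity

lemma sum_post_aux (π : UDAClass X Y) {m n : ℕ} (s : Sample X Y m n)
    (hZ : 0 < Zval π s) : ∑ f' : X → Y, post π s f' = 1 := by
  unfold post
  rw [← Finset.sum_div, Finset.sum_comm]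
  have h : ∀ t ∈ π.supp, (∑ f' : X → Y,
      π.w t * iidProb t.1 s.1 * iidProb t.2.1 s.2.1 * (if t.2.2 = f' then 1 else 0) *
        (if ∀ i, f' (s.1 i) = s.2.2 i then 1 else 0))
      = π.w t * iidProb t.1 s.1 * iidProb t.2.1 s.2.1 *
        (if ∀ i, t.2.2 (s.1 i) = s.2.2 i then 1 else 0) := by
    intro t _
    rw [Finset.sum_eq_single t.2.2]
    · simp
    · intro b _ hb
      simp [Ne.symm hb]
    · simp
  rw [Finset.sum_congr rfl h]
  exact div_self hZ.ne'

lemma postA_nonneg_aux (π : UDAClass X Y) {m n : ℕ} (s : Sample X Y m n)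
    (hZ : 0 < Zval π s) (x : X) (y : Y) : 0 ≤ postA π s x y := by
  refine Finset.sum_nonneg fun f' _ => ?_
  have := post_nonneg_aux π s hZ f'
  split_ifs <;> simp <;> positivity

lemma sum_postA_aux (π : UDAClass X Y) {m n : ℕ} (s : Sample X Y m n)
    (hZ : 0 < Zval π s) (x : X) : ∑ y, postA π s x y = 1 := by
  unfold postA
  rw [Finset.sum_comm]
  have h : ∀ f' : X → Y, (∑ y, post π s f' * (if f' x = y then 1 else 0)) = post π s f' := by
    intro f'
    rw [← Finset.mul_sum, Finset.sum_ite_eq Finset.univ (f' x) (fun _ => (1:ℝ))]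
    simp
  rw [Finset.sum_congr rfl fun f' _ => h f']
  exact sum_post_aux π s hZ

/-- Theorem 2, case `k > 2`: the sample-wise risk is lower-bounded
by the Posterior Target Label Uncertainty: `e(𝒜; s, q) ≥ (U(s,q) − 1)/log₂(k−1)`. -/
theorem swRisk_ge_PTLU_of_two_lt_card
    {X Y : Type*} [Fintype X] [Nonempty X] [Fintype Y] [DecidableEq X] [DecidableEq Y]
    (hk : 2 < Fintype.card Y)
    (π : UDAClass X Y) {m n : ℕ} (s : Sample X Y m n) (hZ : 0 < Zval π s)
    (q : X → ℝ) (hq0 : ∀ x, 0 ≤ q x) (hq1 : ∑ x, q x = 1)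
    (A : Sample X Y m n → (X → Y) → ℝ) (hA : IsLearner A) :
    (PTLU π s q - 1) / Real.logb 2 ((Fintype.card Y : ℝ) - 1) ≤ swRisk π A s q := by
  classical
  have h3 : (3:ℝ) ≤ (Fintype.card Y : ℝ) := by exact_mod_cast hk
  set L := Real.logb 2 ((Fintype.card Y : ℝ) - 1) with hLdef
  have hL : 0 < L := Real.logb_pos one_lt_two (by linarith)
  rw [div_le_iff₀ hL]
  have hA0 : ∀ g, 0 ≤ A s g := (hA s).1
  have hA1 : ∑ g : X → Y, A s g = 1 := (hA s).2
  have hμ0 : ∀ x y, 0 ≤ postA π s x y := postA_nonneg_aux π s hZ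
  have hμ1 : ∀ x, ∑ y, postA π s x y = 1 := sum_postA_aux π s hZ
  have inner_eq : ∀ x : X,
      (∑ f' : X → Y, ∑ g : X → Y, post π s f' * A s g * (if f' x ≠ g x then 1 else 0))
      = ∑ g : X → Y, A s g * (1 - postA π s x (g x)) := by
    intro x
    rw [Finset.sum_comm]
    refine Finset.sum_congr rfl fun g _ => ?_
    have h : ∀ f' : X → Y, post π s f' * A s g * (if f' x ≠ g x then 1 else 0)
        = A s g * (post π s f' - post π s f' * (if f' x = g x then 1 else 0)) := by
      intro f'
      by_cases hfg : f' x = g x <;> simp [hfg] <;> ring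
    rw [Finset.sum_congr rfl fun f' _ => h f', ← Finset.mul_sum,
      Finset.sum_sub_distrib, sum_post_aux π s hZ]
    rfl
  have key : ∀ x : X, entropy2 (fun y => postA π s x y)
      ≤ 1 + (∑ g : X → Y, A s g * (1 - postA π s x (g x))) * L := by
    intro x
    calc entropy2 (fun y => postA π s x y)
        = ∑ g : X → Y, A s g * entropy2 (fun y => postA π s x y) := by
          rw [← Finset.sum_mul, hA1, one_mul]
      _ ≤ ∑ g : X → Y, A s g * (1 + (1 - postA π s x (g x)) * L) := by
          refine Finset.sum_le_sum fun g _ => ?_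
          exact mul_le_mul_of_nonneg_left
            (fano_aux hk (fun y => postA π s x y) (hμ0 x) (hμ1 x) (g x)) (hA0 g)
      _ = 1 + (∑ g : X → Y, A s g * (1 - postA π s x (g x))) * L := by
          have expand : ∀ g : X → Y, A s g * (1 + (1 - postA π s x (g x)) * L)
              = A s g + A s g * (1 - postA π s x (g x)) * L := by
            intro g; ring
          rw [Finset.sum_congr rfl fun g _ => expand g, Finset.sum_add_distrib, hA1,
            ← Finset.sum_mul]
  have final : (∑ x, q x * entropy2 (fun y => postA π s x y))
      ≤ ∑ x, q x * (1 + (∑ g : X → Y, A s g * (1 - postA π s x (g x))) * L) :=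
    Finset.sum_le_sum fun x _ => mul_le_mul_of_nonneg_left (key x) (hq0 x)
  have expand2 : (∑ x, q x * (1 + (∑ g : X → Y, A s g * (1 - postA π s x (g x))) * L))
      = 1 + (∑ x, q x * ∑ g : X → Y, A s g * (1 - postA π s x (g x))) * L := by
    have e : ∀ x : X, q x * (1 + (∑ g : X → Y, A s g * (1 - postA π s x (g x))) * L)
        = q x + (q x * ∑ g : X → Y, A s g * (1 - postA π s x (g x))) * L := by
      intro x; ring
    rw [Finset.sum_congr rfl fun x _ => e x, Finset.sum_add_distrib, hq1, ← Finset.sum_mul]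
  have hsw : swRisk π A s q = ∑ x, q x * ∑ g : X → Y, A s g * (1 - postA π s x (g x)) := by
    unfold swRisk
    exact Finset.sum_congr rfl fun x _ => by rw [inner_eq x]
  have hP : PTLU π s q = ∑ x, q x * entropy2 (fun y => postA π s x y) := rfl
  rw [hP, hsw]
  linarith [final, expand2]

end
end

section
/- Suppose |𝒴| = k = 2. For every learner 𝒜, every probability mass function q on 𝒳, and every (m,n)-sample s with positive probability under π, the sample-wise risk satisfies e(𝒜; s, q) ≥ U(s, q)²/4 + e*(s, q)². -/
open Finset
open scoped Classical BigOperators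

noncomputable section

variable {X Y : Type*} [Fintype X] [Fintype Y] [DecidableEq X] [DecidableEq Y]

private def Afun (u : ℝ) : ℝ := (Real.log (1+u) - Real.log (1-u))/2

private def Dfun (u : ℝ) : ℝ :=
  ((1+u) * Real.log (1+u) + (1-u) * Real.log (1-u))/2
    - Real.log 2 * (1 - Real.sqrt (1 - u^2))

private def Rfun (u : ℝ) : ℝ := Afun u * Real.sqrt (1 - u^2) / u

private lemma sq_pos {u : ℝ} (h0 : 0 < u) (h1 : u < 1) : 0 < 1 - u^2 := by nlinarith

private lemma hasDerivAt_A {u : ℝ} (h0 : -1 < u) (h1 : u < 1) :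
    HasDerivAt Afun (1/(1 - u^2)) u := by
  have h1p : (0:ℝ) < 1 + u := by linarith
  have h1m : (0:ℝ) < 1 - u := by linarith
  have ha : HasDerivAt (fun u : ℝ => Real.log (1+u)) (1/(1+u)) u := by
    have := ((hasDerivAt_id u).const_add 1).log (by positivity)
    simpa using this
  have hb : HasDerivAt (fun u : ℝ => Real.log (1-u)) (-(1/(1-u))) u := by
    have : HasDerivAt (fun u : ℝ => 1 - u) (-1) u := by
      simpa using ((hasDerivAt_id u).const_sub 1)
    have := this.log h1m.ne'
    simpa [div_eq_mul_inv] using this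
  have := (ha.sub hb).div_const 2
  refine this.congr_deriv (Eq.symm ?_)
  have h2 : (1:ℝ) - u^2 ≠ 0 := by nlinarith
  field_simp
  ring

private lemma hasDerivAt_sqrt1 {u : ℝ} (h0 : 0 < u) (h1 : u < 1) :
    HasDerivAt (fun u : ℝ => Real.sqrt (1 - u^2)) (-(u / Real.sqrt (1 - u^2))) u := by
  have h2 : (0:ℝ) < 1 - u^2 := sq_pos h0 h1
  have hp : HasDerivAt (fun u : ℝ => 1 - u^2) (-(2*u)) u := by
    simpa using ((hasDerivAt_pow 2 u).const_sub 1)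
  have := hp.sqrt (ne_of_gt h2)
  convert this using 1
  have hs : 0 < Real.sqrt (1 - u^2) := Real.sqrt_pos.mpr h2
  rw [neg_div]
  congr 1
  field_simp

private lemma hasDerivAt_D {u : ℝ} (h0 : 0 < u) (h1 : u < 1) :
    HasDerivAt Dfun (Afun u - Real.log 2 * (u / Real.sqrt (1 - u^2))) u := by
  have h1p : (0:ℝ) < 1 + u := by linarith
  have h1m : (0:ℝ) < 1 - u := by linarith
  have ha : HasDerivAt (fun u : ℝ => (1+u) * Real.log (1+u)) (Real.log (1+u) + 1) u := by
    have hid : HasDerivAt (fun u : ℝ => 1 + u) 1 u := by simpa using (hasDerivAt_id u).const_add 1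
    have hl : HasDerivAt (fun u : ℝ => Real.log (1+u)) (1/(1+u)) u := by
      simpa using hid.log (by positivity)
    have := hid.mul hl
    refine this.congr_deriv (Eq.symm ?_)
    field_simp
  have hb : HasDerivAt (fun u : ℝ => (1-u) * Real.log (1-u)) (-(Real.log (1-u) + 1)) u := by
    have hid : HasDerivAt (fun u : ℝ => 1 - u) (-1) u := by simpa using (hasDerivAt_id u).const_sub 1
    have hl : HasDerivAt (fun u : ℝ => Real.log (1-u)) (-(1/(1-u))) u := by
      simpa [div_eq_mul_inv] using hid.log (by positivity)
    have := hid.mul hl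
    refine this.congr_deriv (Eq.symm ?_)
    field_simp
    ring
  have hs := hasDerivAt_sqrt1 h0 h1
  have hc : HasDerivAt (fun u : ℝ => Real.log 2 * (1 - Real.sqrt (1 - u^2)))
      (Real.log 2 * (u / Real.sqrt (1 - u^2))) u := by
    have := ((hs.const_sub 1).const_mul (Real.log 2))
    refine this.congr_deriv (Eq.symm ?_)
    ring
  have := (((ha.add hb).div_const 2).sub hc)
  refine this.congr_deriv (Eq.symm ?_)
  unfold Afun
  ring

private lemma A_gt {u : ℝ} (h0 : 0 < u) (h1 : u < 1) : u < Afun u := by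
  have key : StrictMonoOn (fun u => Afun u - u) (Set.Ico (0:ℝ) 1) := by
    apply strictMonoOn_of_deriv_pos (convex_Ico 0 1)
    · apply ContinuousOn.sub _ continuousOn_id
      apply ContinuousOn.div_const
      apply ContinuousOn.sub
      · apply ContinuousOn.log (by fun_prop)
        intro x hx; simp only [Set.mem_Ico] at hx; nlinarith [hx.1]
      · apply ContinuousOn.log (by fun_prop)
        intro x hx; simp only [Set.mem_Ico] at hx; nlinarith [hx.2]
    · intro x hx
      rw [interior_Ico] at hx
      obtain ⟨hx0, hx1⟩ := hx
      have : HasDerivAt (fun u => Afun u - u) (1 / (1 - x ^ 2) - 1) x := by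
        exact (hasDerivAt_A (by linarith) hx1).sub (hasDerivAt_id' x)
      rw [this.deriv]
      have h2 : (0:ℝ) < 1 - x^2 := sq_pos hx0 hx1
      rw [sub_pos, lt_div_iff₀ h2]
      nlinarith
  have h := key (Set.mem_Ico.mpr ⟨le_refl 0, one_pos⟩) (Set.mem_Ico.mpr ⟨h0.le, h1⟩) h0
  simp only [Afun] at *
  norm_num at h
  linarith [h]


private lemma hasDerivAt_R {u : ℝ} (h0 : 0 < u) (h1 : u < 1) :
    HasDerivAt Rfun ((u - Afun u)/(Real.sqrt (1 - u^2) * u^2)) u := by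
  have h2 : (0:ℝ) < 1 - u^2 := sq_pos h0 h1
  have hSpos : 0 < Real.sqrt (1 - u^2) := Real.sqrt_pos.mpr h2
  have hS2 : (Real.sqrt (1 - u^2))^2 = 1 - u^2 := Real.sq_sqrt h2.le
  have hA := hasDerivAt_A (by linarith) h1
  have hs := hasDerivAt_sqrt1 h0 h1
  have hN := hA.mul hs
  have hR := hN.div (hasDerivAt_id u) (ne_of_gt h0)
  refine hR.congr_deriv (Eq.symm ?_)
  simp only [id, Pi.mul_apply]
  rw [← hS2]
  have hu : u ≠ 0 := ne_of_gt h0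
  have hSne : Real.sqrt (1 - u^2) ≠ 0 := ne_of_gt hSpos
  field_simp
  have hmul : Real.sqrt (1 - u^2) * Real.sqrt (1 - u^2) = 1 - u^2 := Real.mul_self_sqrt h2.le
  rw [Real.sqrt_sq hSpos.le]
  linear_combination (Afun u) * Real.sqrt (1 - u^2) ^ 2 * hmul

private lemma R_strictAnti : StrictAntiOn Rfun (Set.Ioo (0:ℝ) 1) := by
  apply strictAntiOn_of_deriv_neg (convex_Ioo 0 1)
  · intro x hx
    exact (hasDerivAt_R hx.1 hx.2).differentiableAt.continuousAt.continuousWithinAt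
  · intro x hx
    rw [interior_Ioo] at hx
    rw [(hasDerivAt_R hx.1 hx.2).deriv]
    apply div_neg_of_neg_of_pos
    · linarith [A_gt hx.1 hx.2]
    · have h2 := sq_pos hx.1 hx.2
      have h3 : 0 < Real.sqrt (1 - x^2) := Real.sqrt_pos.mpr h2
      exact mul_pos h3 (pow_pos hx.1 2)

private lemma continuous_D : Continuous Dfun := by
  have h1 : Continuous (fun u : ℝ => (1+u) * Real.log (1+u)) :=
    Real.continuous_mul_log.comp (continuous_const.add continuous_id)
  have h2 : Continuous (fun u : ℝ => (1-u) * Real.log (1-u)) :=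
    Real.continuous_mul_log.comp (continuous_const.sub continuous_id)
  have h3 : Continuous (fun u : ℝ => Real.sqrt (1 - u^2)) :=
    Real.continuous_sqrt.comp (by continuity)
  unfold Dfun
  exact ((h1.add h2).div_const 2).sub (continuous_const.mul (continuous_const.sub h3))

private lemma D_zero : Dfun 0 = 0 := by simp [Dfun]

private lemma D_one : Dfun 1 = 0 := by
  simp [Dfun]
  norm_num

private lemma A_eq_R {v : ℝ} (h0 : 0 < v) (h1 : v < 1) :
    Afun v = Rfun v * v / Real.sqrt (1 - v^2) := by
  have h2 := sq_pos h0 h1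
  have hS : Real.sqrt (1 - v^2) ≠ 0 := ne_of_gt (Real.sqrt_pos.mpr h2)
  unfold Rfun
  field_simp

private lemma D_nonneg {u : ℝ} (hu : u ∈ Set.Icc (0:ℝ) 1) : 0 ≤ Dfun u := by
  obtain ⟨hu0, hu1⟩ := hu
  rcases eq_or_lt_of_le hu0 with h | h0
  · rw [← h, D_zero]
  rcases eq_or_lt_of_le hu1 with h | h1
  · rw [h, D_one]
  by_cases hR : Real.log 2 ≤ Rfun u
  · -- D monotone on [0, u], so D u ≥ D 0 = 0
    have mono : MonotoneOn Dfun (Set.Icc 0 u) := by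
      apply monotoneOn_of_deriv_nonneg (convex_Icc 0 u) continuous_D.continuousOn
      · intro v hv
        rw [interior_Icc] at hv
        exact (hasDerivAt_D hv.1 (lt_trans hv.2 h1)).differentiableAt.differentiableWithinAt
      · intro v hv
        rw [interior_Icc] at hv
        obtain ⟨hv0, hvu⟩ := hv
        have hv1 : v < 1 := lt_trans hvu h1
        rw [(hasDerivAt_D hv0 hv1).deriv]
        have hRv : Real.log 2 ≤ Rfun v :=
          le_of_lt (lt_of_le_of_lt hR (R_strictAnti ⟨hv0, hv1⟩ ⟨h0, h1⟩ hvu))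
        have h2 := sq_pos hv0 hv1
        have hSpos : 0 < Real.sqrt (1 - v^2) := Real.sqrt_pos.mpr h2
        rw [A_eq_R hv0 hv1]
        have key : Rfun v * v / Real.sqrt (1 - v^2) - Real.log 2 * (v / Real.sqrt (1 - v^2))
            = (v / Real.sqrt (1 - v^2)) * (Rfun v - Real.log 2) := by field_simp
        rw [key]
        apply mul_nonneg (by positivity)
        linarith
    have := mono (Set.mem_Icc.mpr ⟨le_refl 0, hu0⟩) (Set.mem_Icc.mpr ⟨hu0, le_refl u⟩) hu0
    rw [D_zero] at this
    exact this
  · push_neg at hR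
    have anti : AntitoneOn Dfun (Set.Icc u 1) := by
      apply antitoneOn_of_deriv_nonpos (convex_Icc u 1) continuous_D.continuousOn
      · intro v hv
        rw [interior_Icc] at hv
        exact (hasDerivAt_D (lt_trans h0 hv.1) hv.2).differentiableAt.differentiableWithinAt
      · intro v hv
        rw [interior_Icc] at hv
        obtain ⟨huv, hv1⟩ := hv
        have hv0 : 0 < v := lt_trans h0 huv
        rw [(hasDerivAt_D hv0 hv1).deriv]
        have hRv : Rfun v < Real.log 2 :=
          lt_trans (R_strictAnti ⟨h0, h1⟩ ⟨hv0, hv1⟩ huv) hR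
        have h2 := sq_pos hv0 hv1
        have hSpos : 0 < Real.sqrt (1 - v^2) := Real.sqrt_pos.mpr h2
        rw [A_eq_R hv0 hv1]
        have key : Rfun v * v / Real.sqrt (1 - v^2) - Real.log 2 * (v / Real.sqrt (1 - v^2))
            = (v / Real.sqrt (1 - v^2)) * (Rfun v - Real.log 2) := by field_simp
        rw [key]
        apply mul_nonpos_of_nonneg_of_nonpos (by positivity)
        linarith
    have := anti (Set.mem_Icc.mpr ⟨le_refl u, hu1⟩) (Set.mem_Icc.mpr ⟨hu1, le_refl 1⟩) hu1
    rw [D_one] at this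
    exact this


private lemma key_half {t : ℝ} (h0 : 0 < t) (h1 : t ≤ 1/2) :
    -(t * Real.log t + (1-t) * Real.log (1-t)) ≤ 2 * Real.log 2 * Real.sqrt (t * (1-t)) := by
  have h1t : (0:ℝ) < 1 - t := by linarith
  have hD := D_nonneg (u := 1-2*t) ⟨by linarith, by linarith⟩
  unfold Dfun at hD
  rw [show (1:ℝ) + (1-2*t) = 2*(1-t) by ring, show (1:ℝ) - (1-2*t) = 2*t by ring,
    show (1:ℝ) - (1-2*t)^2 = 2^2*(t*(1-t)) by ring] at hD
  rw [Real.log_mul two_ne_zero h1t.ne', Real.log_mul two_ne_zero h0.ne'] at hD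
  rw [Real.sqrt_mul (by positivity) (t*(1-t)), Real.sqrt_sq (by norm_num)] at hD
  ring_nf at hD ⊢
  linarith

private lemma key_nat {t : ℝ} (h0 : 0 ≤ t) (h1 : t ≤ 1) :
    -(t * Real.log t + (1-t) * Real.log (1-t)) ≤ 2 * Real.log 2 * Real.sqrt (t * (1-t)) := by
  rcases h0.eq_or_lt with h | h0'
  · rw [← h]; simp
  rcases le_total t (1/2) with h | h
  · exact key_half h0' h
  rcases h1.eq_or_lt with h | h1'
  · rw [h]; simp
  · have key := key_half (t := 1-t) (by linarith) (by linarith)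
    rw [show (1:ℝ)-(1-t) = t by ring] at key
    rw [show t*(1-t) = (1-t)*t by ring]
    linarith

private lemma binent_le {p : ℝ} (h0 : 0 ≤ p) (h1 : p ≤ 1) :
    -(p * Real.logb 2 p + (1-p) * Real.logb 2 (1-p)) ≤ 2 * Real.sqrt (p*(1-p)) := by
  have h := key_nat h0 h1
  have hl2 : 0 < Real.log 2 := Real.log_pos (by norm_num)
  rw [Real.logb, Real.logb]
  have e : -(p * (Real.log p / Real.log 2) + (1-p) * (Real.log (1-p) / Real.log 2))
      = -(p * Real.log p + (1-p) * Real.log (1-p)) / Real.log 2 := by field_simp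
  rw [e, div_le_iff₀ hl2]
  ring_nf at h ⊢
  linarith

/-- Theorem 2, case `k = 2`: the sample-wise risk satisfies
`e(𝒜; s, q) ≥ U(s,q)²/4 + e*(s,q)²`. -/
theorem swRisk_ge_PTLU_of_card_eq_two
    {X Y : Type*} [Fintype X] [Nonempty X] [Fintype Y] [DecidableEq X] [DecidableEq Y]
    (hk : Fintype.card Y = 2)
    (π : UDAClass X Y) {m n : ℕ} (s : Sample X Y m n) (hZ : 0 < Zval π s)
    (q : X → ℝ) (hq0 : ∀ x, 0 ≤ q x) (hq1 : ∑ x, q x = 1)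
    (A : Sample X Y m n → (X → Y) → ℝ) (hA : IsLearner A) :
    (PTLU π s q) ^ 2 / 4 + (eStar π s q) ^ 2 ≤ swRisk π A s q := by
  classical
  obtain ⟨y₁, y₂, hy, hY⟩ : ∃ a b : Y, a ≠ b ∧ (Finset.univ : Finset Y) = {a, b} := by
    have := (Finset.card_eq_two (s := (Finset.univ : Finset Y))).mp (by rw [Finset.card_univ]; exact hk)
    exact this
  have hYmem : ∀ y : Y, y = y₁ ∨ y = y₂ := by
    intro y
    have := Finset.mem_univ y
    rw [hY] at this
    simpa using this
  -- basic posterior facts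
  have post_nonneg : ∀ f : X → Y, 0 ≤ post π s f := by
    intro f
    apply div_nonneg _ hZ.le
    apply Finset.sum_nonneg
    intro t ht
    have hw := π.w_nonneg t
    have hp : 0 ≤ iidProb t.1 s.1 := Finset.prod_nonneg fun i _ => π.p_nonneg t ht _
    have hq' : 0 ≤ iidProb t.2.1 s.2.1 := Finset.prod_nonneg fun i _ => π.q_nonneg t ht _
    have i1 : (0:ℝ) ≤ (if t.2.2 = f then 1 else 0) := by split <;> norm_num
    have i2 : (0:ℝ) ≤ (if ∀ i, f (s.1 i) = s.2.2 i then 1 else 0) := by split <;> norm_num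
    exact mul_nonneg (mul_nonneg (mul_nonneg (mul_nonneg hw hp) hq') i1) i2
  have post_sum : ∑ f : X → Y, post π s f = 1 := by
    unfold post
    rw [← Finset.sum_div, Finset.sum_comm]
    have hcong : ∀ t ∈ π.supp, (∑ f : X → Y, π.w t * iidProb t.1 s.1 * iidProb t.2.1 s.2.1 *
        (if t.2.2 = f then 1 else 0) * (if ∀ i, f (s.1 i) = s.2.2 i then 1 else 0))
        = π.w t * iidProb t.1 s.1 * iidProb t.2.1 s.2.1 *
          (if ∀ i, t.2.2 (s.1 i) = s.2.2 i then 1 else 0) := by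
      intro t _
      rw [Finset.sum_eq_single t.2.2]
      · simp
      · intro f _ hf
        simp [Ne.symm hf]
      · intro h
        exact absurd (Finset.mem_univ _) h
    rw [Finset.sum_congr rfl hcong]
    exact div_self (ne_of_gt hZ)
  have postA_nonneg : ∀ x y, 0 ≤ postA π s x y := by
    intro x y
    apply Finset.sum_nonneg
    intro f _
    exact mul_nonneg (post_nonneg f) (by split <;> norm_num)
  have postA_sum : ∀ x, ∑ y, postA π s x y = 1 := by
    intro x
    unfold postA
    rw [Finset.sum_comm]
    have hcong : ∀ f ∈ (Finset.univ : Finset (X → Y)),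
        ∑ y, post π s f * (if f x = y then 1 else 0) = post π s f := by
      intro f _
      rw [← Finset.mul_sum]
      simp
    rw [Finset.sum_congr rfl hcong]
    exact post_sum
  have hsum2 : ∀ x, postA π s x y₁ + postA π s x y₂ = 1 := by
    intro x
    have := postA_sum x
    rw [hY, Finset.sum_pair hy] at this
    exact this
  have postA_le_one : ∀ x y, postA π s x y ≤ 1 := by
    intro x y
    have h2 := hsum2 x
    rcases hYmem y with h | h <;> rw [h] <;>
      [linarith [postA_nonneg x y₂]; linarith [postA_nonneg x y₁]]
  set a : X → ℝ := fun x => min (postA π s x y₁) (postA π s x y₂) with ha_def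
  have ha0 : ∀ x, 0 ≤ a x := fun x => le_min (postA_nonneg x y₁) (postA_nonneg x y₂)
  have ha_half : ∀ x, a x ≤ 1 - a x := by
    intro x
    have h2 := hsum2 x
    rcases le_total (postA π s x y₁) (postA π s x y₂) with h | h
    · rw [ha_def]; simp only [min_eq_left h]; linarith
    · rw [ha_def]; simp only [min_eq_right h]; linarith
  have hamax : ∀ x y, postA π s x y ≤ 1 - a x := by
    intro x y
    have h2 := hsum2 x
    rcases hYmem y with h | h <;> rw [h] <;>
      rcases le_total (postA π s x y₁) (postA π s x y₂) with h' | h' <;>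
      simp only [ha_def, min_eq_left h', min_eq_right h'] <;> linarith
  -- swRisk identity
  have swR : ∀ (B : Sample X Y m n → (X → Y) → ℝ),
      swRisk π B s q = ∑ x, q x * ∑ g : X → Y, B s g * (1 - postA π s x (g x)) := by
    intro B
    unfold swRisk
    apply Finset.sum_congr rfl
    intro x _
    congr 1
    rw [Finset.sum_comm]
    apply Finset.sum_congr rfl
    intro g _
    have e1 : ∀ f : X → Y, post π s f * B s g * (if f x ≠ g x then 1 else 0)
        = B s g * (post π s f - post π s f * (if f x = g x then 1 else 0)) := by
      intro f
      by_cases h : f x = g x <;> simp [h] <;> ring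
    rw [Finset.sum_congr rfl fun f _ => e1 f, ← Finset.mul_sum, Finset.sum_sub_distrib, post_sum]
    unfold postA
    rfl
  -- lower bound on swRisk of A
  have hE_le : ∑ x, q x * a x ≤ swRisk π A s q := by
    rw [swR A]
    apply Finset.sum_le_sum
    intro x _
    apply mul_le_mul_of_nonneg_left _ (hq0 x)
    calc a x = ∑ g : X → Y, A s g * a x := by rw [← Finset.sum_mul, (hA s).2, one_mul]
    _ ≤ ∑ g : X → Y, A s g * (1 - postA π s x (g x)) := by
        apply Finset.sum_le_sum
        intro g _
        apply mul_le_mul_of_nonneg_left _ ((hA s).1 g)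
        have := hamax x (g x)
        linarith
  -- the Bayes learner
  set gB : X → Y := fun x => if postA π s x y₂ ≤ postA π s x y₁ then y₁ else y₂ with hgB
  have hgBval : ∀ x, postA π s x (gB x) = 1 - a x := by
    intro x
    have h2 := hsum2 x
    rcases le_or_gt (postA π s x y₂) (postA π s x y₁) with h | h
    · rw [hgB]; simp only [if_pos h]
      rw [ha_def]; simp only [min_eq_right h]; linarith
    · rw [hgB]; simp only [if_neg (not_le.mpr h)]
      rw [ha_def]; simp only [min_eq_left h.le]; linarith
  set B : Sample X Y m n → (X → Y) → ℝ := fun _ g => if g = gB then (1:ℝ) else 0 with hB_def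
  have hB : IsLearner B := by
    intro s'
    constructor
    · intro g; rw [hB_def]; dsimp only; split <;> norm_num
    · rw [hB_def]; simp
  have hBval : swRisk π B s q = ∑ x, q x * a x := by
    rw [swR B]
    apply Finset.sum_congr rfl
    intro x _
    congr 1
    rw [Finset.sum_eq_single gB]
    · rw [hB_def]; simp only [if_pos rfl, one_mul, hgBval x]; norm_num
    · intro g _ hg
      rw [hB_def]; simp [hg]
    · intro h
      exact absurd (Finset.mem_univ _) h
  have swRisk_nonneg : ∀ (A' : Sample X Y m n → (X → Y) → ℝ), IsLearner A' →
      0 ≤ swRisk π A' s q := by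
    intro A' hA'
    apply Finset.sum_nonneg
    intro x _
    apply mul_nonneg (hq0 x)
    apply Finset.sum_nonneg
    intro f _
    apply Finset.sum_nonneg
    intro g _
    exact mul_nonneg (mul_nonneg (post_nonneg f) ((hA' s).1 g)) (by split <;> norm_num)
  have hbdd : BddBelow {r : ℝ | ∃ A' : Sample X Y m n → (X → Y) → ℝ,
      IsLearner A' ∧ swRisk π A' s q = r} := by
    refine ⟨0, ?_⟩
    rintro r ⟨A', hA', rfl⟩
    exact swRisk_nonneg A' hA'
  have heStar_le : eStar π s q ≤ ∑ x, q x * a x :=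
    csInf_le hbdd ⟨B, hB, hBval⟩
  have heStar0 : 0 ≤ eStar π s q := by
    apply Real.sInf_nonneg
    rintro r ⟨A', hA', rfl⟩
    exact swRisk_nonneg A' hA'
  -- entropy bound
  have hent : ∀ x, entropy2 (fun y => postA π s x y) ≤ 2 * Real.sqrt (a x * (1 - a x)) := by
    intro x
    have h2 := hsum2 x
    have key := binent_le (postA_nonneg x y₁) (by linarith [postA_nonneg x y₂])
    have haeq : a x * (1 - a x) = postA π s x y₁ * (1 - postA π s x y₁) := by
      rcases le_total (postA π s x y₁) (postA π s x y₂) with h' | h' <;>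
        simp only [ha_def, min_eq_left h', min_eq_right h'] <;> nlinarith
    unfold entropy2
    rw [hY, Finset.sum_pair hy, haeq]
    beta_reduce
    have hp2 : postA π s x y₂ = 1 - postA π s x y₁ := by linarith
    rw [hp2]
    exact key
  have hent0 : ∀ x, 0 ≤ entropy2 (fun y => postA π s x y) := by
    intro x
    unfold entropy2
    rw [neg_nonneg]
    apply Finset.sum_nonpos
    intro y _
    exact mul_nonpos_of_nonneg_of_nonpos (postA_nonneg x y)
      (Real.logb_nonpos (by norm_num) (postA_nonneg x y) (postA_le_one x y))
  -- assembling
  set T : ℝ := ∑ x, q x * Real.sqrt (a x * (1 - a x)) with hT_def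
  have hU2T : PTLU π s q ≤ 2 * T := by
    rw [hT_def, Finset.mul_sum]
    unfold PTLU
    apply Finset.sum_le_sum
    intro x _
    calc q x * entropy2 (fun y => postA π s x y)
        ≤ q x * (2 * Real.sqrt (a x * (1 - a x))) :=
          mul_le_mul_of_nonneg_left (hent x) (hq0 x)
    _ = 2 * (q x * Real.sqrt (a x * (1 - a x))) := by ring
  have hU0 : 0 ≤ PTLU π s q :=
    Finset.sum_nonneg fun x _ => mul_nonneg (hq0 x) (hent0 x)
  have hT0 : 0 ≤ T :=
    Finset.sum_nonneg fun x _ => mul_nonneg (hq0 x) (Real.sqrt_nonneg _)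
  have hUsq : (PTLU π s q)^2 ≤ 4 * T^2 := by
    have := sq_le_sq' (by linarith : -(2*T) ≤ PTLU π s q) hU2T
    nlinarith [this]
  have hTsq : T^2 ≤ ∑ x, q x * (a x * (1 - a x)) := by
    have hcs := Finset.sum_sq_le_sum_mul_sum_of_sq_eq_mul Finset.univ
      (r := fun x => q x * Real.sqrt (a x * (1 - a x)))
      (f := q) (g := fun x => q x * (a x * (1 - a x)))
      (fun x _ => hq0 x)
      (fun x _ => mul_nonneg (hq0 x) (mul_nonneg (ha0 x) (by linarith [ha_half x, ha0 x])))
      (fun x _ => by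
        rw [mul_pow, Real.sq_sqrt (mul_nonneg (ha0 x) (by linarith [ha_half x, ha0 x]))]
        ring)
    rw [hq1, one_mul] at hcs
    exact hcs
  have hEsq : (∑ x, q x * a x)^2 ≤ ∑ x, q x * (a x)^2 := by
    have hcs := Finset.sum_sq_le_sum_mul_sum_of_sq_eq_mul Finset.univ
      (r := fun x => q x * a x)
      (f := q) (g := fun x => q x * (a x)^2)
      (fun x _ => hq0 x)
      (fun x _ => mul_nonneg (hq0 x) (sq_nonneg _))
      (fun x _ => by ring)
    rw [hq1, one_mul] at hcs
    exact hcs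
  have heStar_sq : (eStar π s q)^2 ≤ (∑ x, q x * a x)^2 :=
    pow_le_pow_left₀ heStar0 heStar_le 2
  have hfinal : (∑ x, q x * (a x * (1 - a x))) + ∑ x, q x * (a x)^2 = ∑ x, q x * a x := by
    rw [← Finset.sum_add_distrib]
    apply Finset.sum_congr rfl
    intro x _
    ring
  calc (PTLU π s q)^2/4 + (eStar π s q)^2
      ≤ T^2 + (∑ x, q x * a x)^2 := by
        have h1 : (PTLU π s q)^2/4 ≤ T^2 := by linarith
        linarith [heStar_sq]
  _ ≤ (∑ x, q x * (a x * (1 - a x))) + ∑ x, q x * (a x)^2 := add_le_add hTsq hEsq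
  _ = ∑ x, q x * a x := hfinal
  _ ≤ swRisk π A s q := hE_le


end
end

section
/- For every infinite-sample learner 𝒜_∞ and every UDA instance (p,q,f) in the support of π: if |𝒴| = k > 2 then e(𝒜_∞; p, q, f_p) ≥ (U(p, q, f_p) − 1) / log₂(k − 1); and if k = 2 then e(𝒜_∞; p, q, f_p) ≥ U(p, q, f_p)²/4 + e*(p, q, f_p)². -/
open Finset
open scoped Classical BigOperators

noncomputable section

variable {X Y : Type*} [Fintype X] [Fintype Y] [DecidableEq X] [DecidableEq Y]

/-- `v² - 1 ≤ 2 v log v` for `0 < v ≤ 1`. -/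
lemma aux_log_lower (v : ℝ) (h0 : 0 < v) (h1 : v ≤ 1) :
    v ^ 2 - 1 ≤ 2 * (v * Real.log v) := by
  set f : ℝ → ℝ := fun t => 2 * (t * Real.log t) - t ^ 2 with hf
  have key : AntitoneOn f (Set.Icc v 1) := by
    apply antitoneOn_of_deriv_nonpos (convex_Icc v 1)
    · exact ((continuous_const.mul Real.continuous_mul_log).sub (continuous_pow 2)).continuousOn
    · intro t ht
      rw [interior_Icc] at ht
      have ht0 : (0:ℝ) < t := lt_trans h0 ht.1
      exact (((Real.hasDerivAt_mul_log ht0.ne').const_mul 2).sub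
        (hasDerivAt_pow 2 t)).differentiableAt.differentiableWithinAt
    · intro t ht
      rw [interior_Icc] at ht
      have ht0 : (0:ℝ) < t := lt_trans h0 ht.1
      have hd := (((Real.hasDerivAt_mul_log ht0.ne').const_mul 2).sub
        (hasDerivAt_pow 2 t)).deriv
      rw [show deriv f t = _ from hd]
      have := Real.log_le_sub_one_of_pos ht0
      norm_num
      nlinarith
  have h := key (Set.left_mem_Icc.2 h1) (Set.right_mem_Icc.2 h1) h1
  simp only [hf, Real.log_one] at h
  nlinarith

/-- `log(1+t) - log(1-t) ≥ 2t` on `[0,1)`. -/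
lemma aux_atanh (t : ℝ) (h0 : 0 ≤ t) (h1 : t < 1) :
    2 * t ≤ Real.log (1 + t) - Real.log (1 - t) := by
  set f : ℝ → ℝ := fun u => Real.log (1 + u) - Real.log (1 - u) - 2 * u with hf
  have hderiv : ∀ u : ℝ, 0 < 1 + u → 0 < 1 - u →
      HasDerivAt f ((1 + u)⁻¹ - (1 - u)⁻¹ * (-1) - 2) u := by
    intro u ha hb
    have h1' : HasDerivAt (fun x : ℝ => Real.log (1 + x)) ((1 + u)⁻¹ * 1) u := by
      exact (Real.hasDerivAt_log ha.ne').comp u ((hasDerivAt_id u).const_add 1)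
    have h2' : HasDerivAt (fun x : ℝ => Real.log (1 - x)) ((1 - u)⁻¹ * (-1)) u := by
      exact (Real.hasDerivAt_log hb.ne').comp u ((hasDerivAt_id u).const_sub 1)
    have h3' : HasDerivAt (fun x : ℝ => (2:ℝ) * x) 2 u := by
      simpa using (hasDerivAt_id u).const_mul 2
    have h4 := (h1'.sub h2').sub h3'
    rw [show (1 + u)⁻¹ - (1 - u)⁻¹ * (-1) - 2 = (1 + u)⁻¹ * 1 - (1 - u)⁻¹ * (-1) - 2 by ring]
    exact h4
  have key : MonotoneOn f (Set.Icc 0 t) := by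
    apply monotoneOn_of_deriv_nonneg (convex_Icc 0 t)
    · apply ContinuousOn.sub
      apply ContinuousOn.sub
      · apply Real.continuousOn_log.comp ((continuous_const.add continuous_id).continuousOn)
        intro x hx
        have : (0:ℝ) < 1 + x := by have := hx.1; linarith
        simp [this.ne']
      · apply Real.continuousOn_log.comp ((continuous_const.sub continuous_id).continuousOn)
        intro x hx
        have : (0:ℝ) < 1 - x := by have := hx.2; linarith
        simp [this.ne']
      · exact (continuous_const.mul continuous_id).continuousOn
    · intro u hu
      rw [interior_Icc] at hu
      have ha : (0:ℝ) < 1 + u := by linarith [hu.1]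
      have hb : (0:ℝ) < 1 - u := by linarith [hu.2, h1]
      exact (hderiv u ha hb).differentiableAt.differentiableWithinAt
    · intro u hu
      rw [interior_Icc] at hu
      have ha : (0:ℝ) < 1 + u := by linarith [hu.1]
      have hb : (0:ℝ) < 1 - u := by linarith [hu.2, h1]
      rw [(hderiv u ha hb).deriv]
      have e1 : (1 + u)⁻¹ - (1 - u)⁻¹ * (-1) - 2 = 2 * u ^ 2 / ((1 + u) * (1 - u)) := by
        field_simp
        ring
      rw [e1]
      positivity
  have h := key (Set.left_mem_Icc.2 h0) (Set.right_mem_Icc.2 h0) h0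
  simp only [hf, add_zero, sub_zero, mul_zero, Real.log_one] at h
  linarith

/-- `(1+w)log(1+w) + (1-w)log(1-w) ≥ w²` on `[0,1)`. -/
lemma aux_center (w : ℝ) (h0 : 0 ≤ w) (h1 : w < 1) :
    w ^ 2 ≤ (1 + w) * Real.log (1 + w) + (1 - w) * Real.log (1 - w) := by
  set f : ℝ → ℝ := fun t => (1 + t) * Real.log (1 + t) + (1 - t) * Real.log (1 - t) - t ^ 2
    with hf
  have hderiv : ∀ u : ℝ, 0 < 1 + u → 0 < 1 - u →
      HasDerivAt f ((Real.log (1 + u) + 1) * 1 + (Real.log (1 - u) + 1) * (-1) - 2 * u ^ 1) u := by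
    intro u ha hb
    have h1' : HasDerivAt (fun x : ℝ => (1 + x) * Real.log (1 + x))
        ((Real.log (1 + u) + 1) * 1) u :=
      (Real.hasDerivAt_mul_log ha.ne').comp u ((hasDerivAt_id u).const_add 1)
    have h2' : HasDerivAt (fun x : ℝ => (1 - x) * Real.log (1 - x))
        ((Real.log (1 - u) + 1) * (-1)) u :=
      (Real.hasDerivAt_mul_log hb.ne').comp u ((hasDerivAt_id u).const_sub 1)
    exact (h1'.add h2').sub (hasDerivAt_pow 2 u)
  have key : MonotoneOn f (Set.Icc 0 w) := by
    apply monotoneOn_of_deriv_nonneg (convex_Icc 0 w)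
    · apply ContinuousOn.sub
      · apply Continuous.continuousOn
        exact (Real.continuous_mul_log.comp (continuous_const.add continuous_id)).add
          (Real.continuous_mul_log.comp (continuous_const.sub continuous_id))
      · exact (continuous_pow 2).continuousOn
    · intro u hu
      rw [interior_Icc] at hu
      have ha : (0:ℝ) < 1 + u := by linarith [hu.1]
      have hb : (0:ℝ) < 1 - u := by linarith [hu.2, h1]
      exact (hderiv u ha hb).differentiableAt.differentiableWithinAt
    · intro u hu
      rw [interior_Icc] at hu
      have ha : (0:ℝ) < 1 + u := by linarith [hu.1]
      have hb : (0:ℝ) < 1 - u := by linarith [hu.2, h1]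
      rw [(hderiv u ha hb).deriv]
      have := aux_atanh u (le_of_lt hu.1) (by linarith [hu.2, h1])
      simp only [pow_one]
      linarith
  have h := key (Set.left_mem_Icc.2 h0) (Set.right_mem_Icc.2 h0) h0
  simp only [hf] at h
  simp only [add_zero, sub_zero, Real.log_one] at h
  nlinarith [h]


lemma helper_center (s L w : ℝ) (hsnn : 0 ≤ s) (hs18 : 1/8 ≤ s^2) (hws : w^2 = 1 - 4*s^2)
    (hLu : L < 0.6931471808) (hLl : (0.6931471803:ℝ) < L) : L - w^2/2 ≤ 2*L*s := by
  have hsl : (0.35:ℝ) ≤ s := by nlinarith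
  have hsu : 2*s ≤ 1 := by nlinarith
  have hprod : 0 ≤ (1-2*s)*((1+2*s)/2 - L) := mul_nonneg (by linarith) (by linarith)
  nlinarith [hprod]

lemma helper_ab (a b s L : ℝ) (ha0 : 0 < a) (hb0 : 0 < b) (habsq : (a+b)^2 = 1+2*s)
    (hs18 : s^2 ≤ 1/8) (hsnn : 0 ≤ s) (hLl : (0.6931471803:ℝ) < L) : a + b ≤ 2*L := by
  have hsle : s ≤ 0.354 := by nlinarith
  nlinarith [habsq, hsle, ha0, hb0]

lemma binEnt_le_sqrt_half (t : ℝ) (h0 : 0 < t) (hhalf : t ≤ 1/2) :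
    -(t * Real.log t) - (1 - t) * Real.log (1 - t)
      ≤ 2 * Real.log 2 * Real.sqrt (t * (1 - t)) := by
  have h1 : t < 1 := by linarith
  have hq : 0 < 1 - t := by linarith
  have hlog2u : Real.log 2 < 0.6931471808 := Real.log_two_lt_d9
  have hlog2l : (0.6931471803:ℝ) < Real.log 2 := Real.log_two_gt_d9
  have hs0 : 0 ≤ t * (1 - t) := by nlinarith
  obtain ⟨a, ha0, ha2⟩ : ∃ a : ℝ, 0 < a ∧ a ^ 2 = t :=
    ⟨Real.sqrt t, Real.sqrt_pos.2 h0, Real.sq_sqrt h0.le⟩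
  obtain ⟨b, hb0, hb2⟩ : ∃ b : ℝ, 0 < b ∧ b ^ 2 = 1 - t :=
    ⟨Real.sqrt (1 - t), Real.sqrt_pos.2 hq, Real.sq_sqrt hq.le⟩
  have hsval : Real.sqrt (t * (1 - t)) = a * b := by
    rw [show t * (1 - t) = (a * b) ^ 2 by rw [mul_pow, ha2, hb2],
      Real.sqrt_sq (by positivity)]
  rw [hsval]
  have hsnn : 0 ≤ a * b := by positivity
  have hs2 : (a * b) ^ 2 = t * (1 - t) := by rw [mul_pow, ha2, hb2]
  have hla : Real.log t = 2 * Real.log a := by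
    rw [← ha2, Real.log_pow]; push_cast; ring
  have hlb : Real.log (1 - t) = 2 * Real.log b := by
    rw [← hb2, Real.log_pow]; push_cast; ring
  by_cases hcase : 1/8 ≤ t * (1 - t)
  · -- center case
    have hcen := aux_center (1 - 2*t) (by linarith) (by linarith)
    rw [show (1:ℝ) + (1 - 2*t) = 2 * (1 - t) by ring,
        show (1:ℝ) - (1 - 2*t) = 2 * t by ring,
        Real.log_mul (by norm_num) hq.ne', Real.log_mul (by norm_num) h0.ne'] at hcen
    have step1 := helper_center (a*b) (Real.log 2) (1 - 2*t) hsnn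
      (by rw [hs2]; linarith) (by rw [hs2]; ring) hlog2u hlog2l
    nlinarith [hcen, step1]
  · -- crude case
    push_neg at hcase
    have ha1 : a ≤ 1 := by nlinarith
    have hb1 : b ≤ 1 := by nlinarith
    have hA := aux_log_lower a ha0 ha1
    have hB := aux_log_lower b hb0 hb1
    have k1 : -(t * Real.log t) ≤ a * b ^ 2 := by
      have hA' := mul_le_mul_of_nonneg_left hA ha0.le
      have h' : -(2 * (a^2 * Real.log a)) ≤ a * (1 - a^2) := by nlinarith [hA']
      calc -(t * Real.log t) = -(2 * (a^2 * Real.log a)) := by rw [hla, ← ha2]; ring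
        _ ≤ a * (1 - a^2) := h'
        _ = a * b^2 := by rw [ha2, hb2]
    have k2 : -((1-t) * Real.log (1-t)) ≤ b * a ^ 2 := by
      have hB' := mul_le_mul_of_nonneg_left hB hb0.le
      have h' : -(2 * (b^2 * Real.log b)) ≤ b * (1 - b^2) := by nlinarith [hB']
      calc -((1-t) * Real.log (1-t)) = -(2 * (b^2 * Real.log b)) := by rw [hlb, ← hb2]; ring
        _ ≤ b * (1 - b^2) := h'
        _ = b * a^2 := by rw [hb2]; rw [show (1:ℝ) - (1 - t) = t by ring, ← ha2]
    have habsq : (a + b) ^ 2 = 1 + 2 * (a*b) := by linear_combination ha2 + hb2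
    have hab2 : a + b ≤ 2 * Real.log 2 :=
      helper_ab a b (a*b) (Real.log 2) ha0 hb0 habsq (by rw [hs2]; linarith) hsnn hlog2l
    have goal2 : a * b ^ 2 + b * a ^ 2 ≤ 2 * Real.log 2 * (a * b) := by
      calc a * b ^ 2 + b * a ^ 2 = (a*b) * (a + b) := by ring
        _ ≤ (a*b) * (2 * Real.log 2) := mul_le_mul_of_nonneg_left hab2 hsnn
        _ = 2 * Real.log 2 * (a * b) := by ring
    linarith [k1, k2]

/-- binary entropy (nat log) bound, all `t ∈ [0,1]`. -/
lemma binEnt_le_sqrt (t : ℝ) (h0 : 0 ≤ t) (h1 : t ≤ 1) :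
    -(t * Real.log t) - (1 - t) * Real.log (1 - t)
      ≤ 2 * Real.log 2 * Real.sqrt (t * (1 - t)) := by
  have hl2 : 0 < Real.log 2 := Real.log_pos (by norm_num)
  rcases eq_or_lt_of_le h0 with h|h0'
  · simp [← h]
  rcases eq_or_lt_of_le h1 with h|h1'
  · simp [h]
  by_cases hhalf : t ≤ 1/2
  · exact binEnt_le_sqrt_half t h0' hhalf
  · have := binEnt_le_sqrt_half (1 - t) (by linarith) (by linarith)
    have e : (1:ℝ) - (1 - t) = t := by ring
    rw [e] at this
    calc -(t * Real.log t) - (1 - t) * Real.log (1 - t)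
        = -((1-t) * Real.log (1-t)) - t * Real.log t := by ring
      _ ≤ 2 * Real.log 2 * Real.sqrt ((1 - t) * t) := this
      _ = 2 * Real.log 2 * Real.sqrt (t * (1 - t)) := by rw [mul_comm (1-t) t]

/-- squared binary entropy in bits. -/
lemma binEnt2_sq_le (t : ℝ) (h0 : 0 ≤ t) (h1 : t ≤ 1) :
    (-(t * Real.logb 2 t) - (1 - t) * Real.logb 2 (1 - t)) ^ 2 ≤ 4 * (t * (1 - t)) := by
  have hl2 : 0 < Real.log 2 := Real.log_pos (by norm_num)
  have hs0 : 0 ≤ t * (1 - t) := by nlinarith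
  have hs2 : Real.sqrt (t * (1-t)) ^ 2 = t * (1 - t) := Real.sq_sqrt hs0
  have hub := binEnt_le_sqrt t h0 h1
  have hlb : 0 ≤ -(t * Real.log t) - (1 - t) * Real.log (1 - t) := by
    have l1 : t * Real.log t ≤ 0 := mul_nonpos_of_nonneg_of_nonpos h0
      (Real.log_nonpos h0 h1)
    have l2 : (1 - t) * Real.log (1 - t) ≤ 0 := mul_nonpos_of_nonneg_of_nonpos (by linarith)
      (Real.log_nonpos (by linarith) (by linarith))
    linarith
  have e : -(t * Real.logb 2 t) - (1 - t) * Real.logb 2 (1 - t)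
      = (-(t * Real.log t) - (1 - t) * Real.log (1 - t)) / Real.log 2 := by
    rw [Real.logb, Real.logb]; ring
  rw [e, div_pow]
  rw [div_le_iff₀ (by positivity)]
  calc (-(t * Real.log t) - (1 - t) * Real.log (1 - t)) ^ 2
      ≤ (2 * Real.log 2 * Real.sqrt (t * (1 - t))) ^ 2 := by
        apply sq_le_sq' (by nlinarith [Real.sqrt_nonneg (t*(1-t))]) hub
    _ = 4 * (t * (1 - t)) * Real.log 2 ^ 2 := by rw [mul_pow, mul_pow, hs2]; ring

lemma fano_aux_s7 (a P : ℝ) (ha : 0 ≤ a) (hP : 0 ≤ P) (hsum : a + P = 1) :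
    -(a * Real.log a) - P * Real.log P ≤ Real.log 2 := by
  have key : ∀ z : ℝ, 0 ≤ z → -(z * Real.log z) ≤ z * Real.log 2 + (1/2 - z) := by
    intro z hz
    rcases eq_or_lt_of_le hz with h|h
    · simp [← h]
    · have h2z : 0 < 1 / (2 * z) := by positivity
      have hl := Real.log_le_sub_one_of_pos h2z
      have e : Real.log (1 / (2 * z)) = -(Real.log 2 + Real.log z) := by
        rw [one_div, Real.log_inv, Real.log_mul (by norm_num) h.ne']
      rw [e] at hl
      have := mul_le_mul_of_nonneg_left hl hz
      have hz2 : z * (1 / (2 * z)) = 1/2 := by field_simp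
      nlinarith [this]
  have k1 := key a ha
  have k2 := key P hP
  have hsum2 : a * Real.log 2 + P * Real.log 2 = Real.log 2 := by
    linear_combination Real.log 2 * hsum
  linarith

lemma fano {Y : Type*} [Fintype Y] [DecidableEq Y] (μ : Y → ℝ) (h0 : ∀ y, 0 ≤ μ y)
    (h1 : ∑ y, μ y = 1) (ys : Y) (hmax : ∀ y, μ y ≤ μ ys) (hk : 2 ≤ Fintype.card Y) :
    entropy2 μ ≤ 1 + (1 - μ ys) * Real.logb 2 ((Fintype.card Y : ℝ) - 1) := by
  have hl2 : 0 < Real.log 2 := Real.log_pos (by norm_num)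
  set a := μ ys with haa
  set P := 1 - a with hPP
  have hys : ys ∈ (univ : Finset Y) := mem_univ ys
  have hsplit : a + ∑ y ∈ univ.erase ys, μ y = 1 := by
    rw [haa, Finset.add_sum_erase univ μ hys]; exact h1
  have hPsum : P = ∑ y ∈ univ.erase ys, μ y := by rw [hPP]; linarith
  have hP0 : 0 ≤ P := by
    rw [hPsum]; exact Finset.sum_nonneg (fun y _ => h0 y)
  have ha0 : 0 ≤ a := h0 ys
  have hk1 : (1:ℝ) ≤ (Fintype.card Y : ℝ) - 1 := by
    have : (2:ℝ) ≤ (Fintype.card Y : ℝ) := by exact_mod_cast hk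
    linarith
  have hkpos : (0:ℝ) < (Fintype.card Y : ℝ) - 1 := by linarith
  have hlogk : 0 ≤ Real.log ((Fintype.card Y : ℝ) - 1) := Real.log_nonneg hk1
  -- express entropy2 via natural log
  have hent : entropy2 μ = (-∑ y, μ y * Real.log (μ y)) / Real.log 2 := by
    rw [entropy2, neg_div, neg_inj, Finset.sum_div]
    exact Finset.sum_congr rfl (fun y _ => by rw [Real.logb, mul_div_assoc])
  -- the key bound in natural logs
  have main : -∑ y, μ y * Real.log (μ y) ≤ Real.log 2 + P * Real.log ((Fintype.card Y:ℝ) - 1) := by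
    rcases eq_or_lt_of_le hP0 with hP|hP
    · -- P = 0 : all mass on ys
      have hzero : ∀ y ∈ univ.erase ys, μ y = 0 := by
        have hz : ∑ y ∈ univ.erase ys, μ y = 0 := by rw [← hPsum, ← hP]
        rw [Finset.sum_eq_zero_iff_of_nonneg (fun y _ => h0 y)] at hz
        exact hz
      have ha1 : a = 1 := by rw [hPP] at hP; linarith
      have : ∑ y, μ y * Real.log (μ y) = 0 := by
        rw [← Finset.add_sum_erase univ _ hys]
        rw [haa] at ha1
        rw [ha1, Real.log_one, mul_zero, zero_add]
        apply Finset.sum_eq_zero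
        intro y hy
        rw [hzero y hy, zero_mul]
      rw [this, neg_zero]
      have : 0 ≤ P * Real.log ((Fintype.card Y:ℝ) - 1) := by
        rw [← hP]; simp
      linarith
    · -- P > 0
      set c := P / ((Fintype.card Y : ℝ) - 1) with hc
      have hc0 : 0 < c := div_pos hP hkpos
      set ν : Y → ℝ := fun y => if y = ys then a else c with hν
      have hνsum : ∑ y, ν y = 1 := by
        rw [← Finset.add_sum_erase univ ν hys]
        have e1 : ν ys = a := by simp [hν]
        have hcc : ∀ y ∈ univ.erase ys, ν y = c := fun y hy => by
          simp [hν, (Finset.mem_erase.1 hy).1]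
        have e2 : ∑ y ∈ univ.erase ys, ν y = ((Fintype.card Y : ℝ) - 1) * c := by
          rw [Finset.sum_congr rfl hcc, Finset.sum_const, nsmul_eq_mul,
            Finset.card_erase_of_mem hys, Finset.card_univ]
          congr 1
          have h1c : 1 ≤ Fintype.card Y := by omega
          push_cast [Nat.cast_sub h1c]
          ring
        have e3 : ((Fintype.card Y:ℝ) - 1) * c = P := by
          rw [hc]; field_simp
        rw [e1, e2, e3, hPP]
        ring
      have gibbs : ∀ y : Y, -(μ y * Real.log (μ y)) ≤ -(μ y * Real.log (ν y)) + (ν y - μ y) := by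
        intro y
        rcases eq_or_lt_of_le (h0 y) with h|h
        · have hν0 : 0 ≤ ν y := by
            rw [hν]; dsimp only; split
            · exact ha0
            · exact hc0.le
          simp [← h, hν0]
        · have hν0 : 0 < ν y := by
            rw [hν]; dsimp only; split
            · rename_i hh; rw [hh] at h; exact lt_of_lt_of_le h (hmax ys)
            · exact hc0
          have hl := Real.log_le_sub_one_of_pos (div_pos hν0 h)
          rw [Real.log_div hν0.ne' h.ne'] at hl
          have := mul_le_mul_of_nonneg_left hl h.le
          have e : μ y * (ν y / μ y) = ν y := by field_simp
          nlinarith [this]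
      have hsum_le : -∑ y, μ y * Real.log (μ y)
          ≤ -∑ y, μ y * Real.log (ν y) + (∑ y, ν y - ∑ y, μ y) := by
        rw [← Finset.sum_neg_distrib, ← Finset.sum_neg_distrib, ← Finset.sum_sub_distrib,
          ← Finset.sum_add_distrib]
        exact Finset.sum_le_sum (fun y _ => gibbs y)
      rw [hνsum, h1, sub_self, add_zero] at hsum_le
      have hνlog : -∑ y, μ y * Real.log (ν y)
          = -(a * Real.log a) - P * Real.log c := by
        rw [← Finset.add_sum_erase univ (fun y => μ y * Real.log (ν y)) hys]
        have e1 : ν ys = a := by simp [hν]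
        have e2 : ∑ y ∈ univ.erase ys, μ y * Real.log (ν y)
            = P * Real.log c := by
          rw [hPsum, Finset.sum_mul]
          apply Finset.sum_congr rfl
          intro y hy
          simp [hν, (Finset.mem_erase.1 hy).1]
        rw [e1, e2]
        ring
      have hlogc : Real.log c = Real.log P - Real.log ((Fintype.card Y:ℝ) - 1) := by
        rw [hc, Real.log_div hP.ne' hkpos.ne']
      have := fano_aux_s7 a P ha0 hP0 (by rw [hPP]; ring)
      rw [hνlog, hlogc] at hsum_le
      nlinarith [this, hsum_le, hP0, hlogk]
  -- conclude
  rw [hent]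
  rw [div_le_iff₀ hl2]
  have e : (1 + P * Real.logb 2 ((Fintype.card Y:ℝ) - 1)) * Real.log 2
      = Real.log 2 + P * Real.log ((Fintype.card Y:ℝ) - 1) := by
    rw [Real.logb]
    field_simp
  rw [e]
  exact main


/-- Corollary 2: for every infinite-sample learner `𝒜_∞` and every UDA
instance `(p,q,f)` in the support of `π`: if `k > 2` then
`e(𝒜_∞; p,q,f_p) ≥ (U(p,q,f_p) − 1)/log₂(k−1)`; if `k = 2` then
`e(𝒜_∞; p,q,f_p) ≥ U(p,q,f_p)²/4 + e*(p,q,f_p)²`. -/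
theorem swRiskInf_ge_PTLUInf
    {X Y : Type*} [Fintype X] [Nonempty X] [Fintype Y] [DecidableEq X] [DecidableEq Y]
    (hY : 2 ≤ Fintype.card Y)
    (π : UDAClass X Y) (p q : X → ℝ) (f : X → Y)
    (hmem : (p, q, f) ∈ π.supp) (hw : 0 < π.w (p, q, f))
    (A : InfLearner X Y) (hA : IsInfLearner A) :
    (2 < Fintype.card Y →
      (PTLUInf π p q f - 1) / Real.logb 2 ((Fintype.card Y : ℝ) - 1)
        ≤ swRiskInf π A p q f) ∧
    (Fintype.card Y = 2 →
      (PTLUInf π p q f) ^ 2 / 4 + (eStarInf π p q f) ^ 2 ≤ swRiskInf π A p q f) := by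
  classical
  have hYne : Nonempty Y := Fintype.card_pos_iff.1 (by omega)
  obtain ⟨hA0, hA1⟩ := hA p q (restrictSupp p f)
  have hq0 : ∀ x, 0 ≤ q x := π.q_nonneg (p, q, f) hmem
  have hq1 : ∑ x, q x = 1 := π.q_sum (p, q, f) hmem
  -- the posterior is a probability distribution
  have hcondF0 : ∀ f' : X → Y, 0 ≤ condF π p q f' := by
    intro f'
    exact div_nonneg (π.w_nonneg _) (Finset.sum_nonneg (fun g _ => π.w_nonneg _))
  have hcondFf : 0 < condF π p q f := by
    apply div_pos hw
    exact lt_of_lt_of_le hw (Finset.single_le_sum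
      (f := fun f'' : X → Y => π.w (p, q, f'')) (fun g _ => π.w_nonneg _) (mem_univ f))
  have hind : ∀ f' : X → Y, (0:ℝ) ≤ if ∀ x, p x ≠ 0 → f' x = f x then 1 else 0 := by
    intro f'; split <;> norm_num
  have hD0 : 0 < ∑ f'' : X → Y,
      condF π p q f'' * if ∀ x, p x ≠ 0 → f'' x = f x then 1 else 0 := by
    have hf : condF π p q f * (if ∀ x, p x ≠ 0 → f x = f x then 1 else 0)
        = condF π p q f := by rw [if_pos (fun x _ => rfl), mul_one]
    calc (0:ℝ) < condF π p q f := hcondFf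
      _ = _ := hf.symm
      _ ≤ _ := Finset.single_le_sum
          (f := fun f'' : X → Y => condF π p q f'' *
            if ∀ x, p x ≠ 0 → f'' x = f x then 1 else 0)
          (fun g _ => mul_nonneg (hcondF0 g) (hind g)) (mem_univ f)
  have hρ0 : ∀ f' : X → Y, 0 ≤ postInf π p q f f' := by
    intro f'
    exact div_nonneg (mul_nonneg (hcondF0 f') (hind f')) hD0.le
  have hρ1 : ∑ f' : X → Y, postInf π p q f f' = 1 := by
    rw [show ∑ f' : X → Y, postInf π p q f f'
        = (∑ f' : X → Y, condF π p q f' * if ∀ x, p x ≠ 0 → f' x = f x then 1 else 0) /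
          (∑ f'' : X → Y, condF π p q f'' * if ∀ x, p x ≠ 0 → f'' x = f x then 1 else 0)
      from by rw [Finset.sum_div]; rfl]
    exact div_self hD0.ne'
  -- the aggregated posterior is a probability distribution for each x
  have hμ0 : ∀ x y, 0 ≤ postAInf π p q f x y := by
    intro x y
    apply Finset.sum_nonneg
    intro f' _
    apply mul_nonneg (hρ0 f')
    split <;> norm_num
  have hμ1 : ∀ x y, postAInf π p q f x y ≤ 1 := by
    intro x y
    rw [← hρ1, postAInf]
    apply Finset.sum_le_sum
    intro f' _
    split
    · rw [mul_one]
    · rw [mul_zero]; exact hρ0 f'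
  have hμsum : ∀ x, ∑ y, postAInf π p q f x y = 1 := by
    intro x
    have hone : ∀ f' : X → Y,
        ∑ y, postInf π p q f f' * (if f' x = y then 1 else 0) = postInf π p q f f' := by
      intro f'
      rw [← Finset.mul_sum, Finset.sum_ite_eq univ (f' x) (fun _ => (1:ℝ)),
        if_pos (mem_univ _), mul_one]
    rw [show ∑ y, postAInf π p q f x y
        = ∑ f' : X → Y, ∑ y, postInf π p q f f' * (if f' x = y then 1 else 0)
      from by rw [Finset.sum_comm]; rfl]
    rw [Finset.sum_congr rfl (fun f' _ => hone f')]
    exact hρ1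
  -- risk identity for an arbitrary distribution over classifiers
  have keyId : ∀ D : (X → Y) → ℝ,
      (∑ x, q x * ∑ f' : X → Y, ∑ g : X → Y,
        postInf π p q f f' * D g * (if f' x ≠ g x then 1 else 0))
        = ∑ x, q x * ∑ g : X → Y, D g * (1 - postAInf π p q f x (g x)) := by
    intro D
    apply Finset.sum_congr rfl; intro x _
    congr 1
    rw [Finset.sum_comm]
    apply Finset.sum_congr rfl; intro g _
    have e1 : ∑ f' : X → Y, postInf π p q f f' * D g * (if f' x ≠ g x then 1 else 0)
        = D g * ∑ f' : X → Y, postInf π p q f f' * (1 - (if f' x = g x then 1 else 0)) := by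
      rw [Finset.mul_sum]
      apply Finset.sum_congr rfl; intro f' _
      by_cases h : f' x = g x <;> simp [h] <;> ring
    rw [e1]
    congr 1
    rw [show ∑ f' : X → Y, postInf π p q f f' * (1 - if f' x = g x then 1 else 0)
        = (∑ f' : X → Y, postInf π p q f f')
          - ∑ f' : X → Y, postInf π p q f f' * (if f' x = g x then 1 else 0)
      from by rw [← Finset.sum_sub_distrib]; exact Finset.sum_congr rfl (fun f' _ => by ring)]
    rw [hρ1]
    rfl
  -- risks are nonneg
  have hrisknn : ∀ B : InfLearner X Y, IsInfLearner B → 0 ≤ swRiskInf π B p q f := by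
    intro B hB
    apply Finset.sum_nonneg; intro x _
    apply mul_nonneg (hq0 x)
    apply Finset.sum_nonneg; intro f' _
    apply Finset.sum_nonneg; intro g _
    apply mul_nonneg (mul_nonneg (hρ0 f') ((hB p q (restrictSupp p f)).1 g))
    split <;> norm_num
  -- choose the maximizers
  have hexists : ∀ x, ∃ ys : Y, ∀ y, postAInf π p q f x y ≤ postAInf π p q f x ys := by
    intro x
    obtain ⟨ys, _, h⟩ := Finset.exists_max_image univ (postAInf π p q f x) univ_nonempty
    exact ⟨ys, fun y => h y (mem_univ y)⟩
  choose ystar hystar using hexists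
  -- lower bound on sample-wise risk of the given learner
  have hAid : swRiskInf π A p q f
      = ∑ x, q x * ∑ g : X → Y,
          A p q (restrictSupp p f) g * (1 - postAInf π p q f x (g x)) := keyId _
  have hlow : ∀ x, 1 - postAInf π p q f x (ystar x)
      ≤ ∑ g : X → Y, A p q (restrictSupp p f) g * (1 - postAInf π p q f x (g x)) := by
    intro x
    calc 1 - postAInf π p q f x (ystar x)
        = ∑ g : X → Y, A p q (restrictSupp p f) g * (1 - postAInf π p q f x (ystar x)) := by
          rw [← Finset.sum_mul, hA1, one_mul]
      _ ≤ _ := by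
          apply Finset.sum_le_sum; intro g _
          apply mul_le_mul_of_nonneg_left _ (hA0 g)
          have := hystar x (g x)
          linarith
  have hrisklb : ∑ x, q x * (1 - postAInf π p q f x (ystar x)) ≤ swRiskInf π A p q f := by
    rw [hAid]
    exact Finset.sum_le_sum (fun x _ => mul_le_mul_of_nonneg_left (hlow x) (hq0 x))
  constructor
  · -- k > 2 : Fano
    intro hk3
    set L := Real.logb 2 ((Fintype.card Y : ℝ) - 1) with hL
    have hcard : (3:ℝ) ≤ (Fintype.card Y : ℝ) := by exact_mod_cast hk3
    have hL1 : (1:ℝ) ≤ L := by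
      calc (1:ℝ) = Real.logb 2 2 := (Real.logb_self_eq_one (by norm_num)).symm
        _ ≤ L := Real.logb_le_logb_of_le (by norm_num) (by norm_num) (by linarith)
    have hL0 : (0:ℝ) < L := lt_of_lt_of_le one_pos hL1
    have hfano : ∀ x, entropy2 (fun y => postAInf π p q f x y)
        ≤ 1 + (1 - postAInf π p q f x (ystar x)) * L := by
      intro x
      exact fano (fun y => postAInf π p q f x y) (hμ0 x) (hμsum x) (ystar x)
        (hystar x) hY
    have hU : PTLUInf π p q f ≤ 1 + L * swRiskInf π A p q f := by
      calc PTLUInf π p q f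
          ≤ ∑ x, q x * (1 + (1 - postAInf π p q f x (ystar x)) * L) := by
            apply Finset.sum_le_sum; intro x _
            exact mul_le_mul_of_nonneg_left (hfano x) (hq0 x)
        _ = (∑ x, q x) + L * ∑ x, q x * (1 - postAInf π p q f x (ystar x)) := by
            rw [Finset.mul_sum, ← Finset.sum_add_distrib]
            exact Finset.sum_congr rfl (fun x _ => by ring)
        _ ≤ 1 + L * swRiskInf π A p q f := by
            rw [hq1]
            have := mul_le_mul_of_nonneg_left hrisklb hL0.le
            linarith
    rw [div_le_iff₀ hL0]
    nlinarith [hU]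
  · -- k = 2
    intro hk2
    obtain ⟨y0, y1, hne, huniv⟩ := Finset.card_eq_two.1
      (by rw [Finset.card_univ]; exact hk2 : (univ : Finset Y).card = 2)
    have hmem2 : ∀ y : Y, y = y0 ∨ y = y1 := by
      intro y
      have : y ∈ (univ : Finset Y) := mem_univ y
      rw [huniv, Finset.mem_insert, Finset.mem_singleton] at this
      exact this
    have hsum2 : ∀ x, postAInf π p q f x y0 + postAInf π p q f x y1 = 1 := by
      intro x
      rw [← hμsum x, huniv, Finset.sum_pair hne]
    set m : X → ℝ := fun x => min (postAInf π p q f x y0) (postAInf π p q f x y1) with hm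
    have hm0 : ∀ x, 0 ≤ m x := fun x => le_min (hμ0 x y0) (hμ0 x y1)
    have hmle : ∀ x (y : Y), m x ≤ 1 - postAInf π p q f x y := by
      intro x y
      rcases hmem2 y with h|h <;> rw [h]
      · have := hsum2 x; have := min_le_right (postAInf π p q f x y0)
          (postAInf π p q f x y1); rw [hm]; dsimp only; linarith
      · have := hsum2 x; have := min_le_left (postAInf π p q f x y0)
          (postAInf π p q f x y1); rw [hm]; dsimp only; linarith
    -- entropy bound per x
    have hEntSq : ∀ x, (entropy2 (fun y => postAInf π p q f x y)) ^ 2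
        ≤ 4 * (m x - m x ^ 2) := by
      intro x
      have hEnt : entropy2 (fun y => postAInf π p q f x y)
          = -(postAInf π p q f x y0 * Real.logb 2 (postAInf π p q f x y0))
            - (1 - postAInf π p q f x y0) *
              Real.logb 2 (1 - postAInf π p q f x y0) := by
        rw [entropy2, huniv, Finset.sum_pair hne]
        have e : postAInf π p q f x y1 = 1 - postAInf π p q f x y0 := by
          have := hsum2 x; linarith
        rw [e]; ring
      have hb := binEnt2_sq_le (postAInf π p q f x y0) (hμ0 x y0) (hμ1 x y0)
      rw [hEnt]
      have hprod : postAInf π p q f x y0 * (1 - postAInf π p q f x y0)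
          = m x - m x ^ 2 := by
        have e : postAInf π p q f x y1 = 1 - postAInf π p q f x y0 := by
          have := hsum2 x; linarith
        rcases le_total (postAInf π p q f x y0) (postAInf π p q f x y1) with h|h
        · rw [hm]; dsimp only; rw [min_eq_left h]; ring
        · rw [hm]; dsimp only; rw [min_eq_right h, e]; ring
      rw [← hprod]
      exact hb
    set M := ∑ x, q x * m x with hM
    -- swRisk ≥ M for every learner
    have hMle : ∀ B : InfLearner X Y, IsInfLearner B → M ≤ swRiskInf π B p q f := by
      intro B hB
      rw [show swRiskInf π B p q f = _ from keyId (B p q (restrictSupp p f))]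
      apply Finset.sum_le_sum; intro x _
      apply mul_le_mul_of_nonneg_left _ (hq0 x)
      calc m x = ∑ g : X → Y, B p q (restrictSupp p f) g * m x := by
            rw [← Finset.sum_mul, (hB p q (restrictSupp p f)).2, one_mul]
        _ ≤ _ := by
            apply Finset.sum_le_sum; intro g _
            exact mul_le_mul_of_nonneg_left (hmle x (g x)) ((hB p q (restrictSupp p f)).1 g)
    -- M is attained by the constant argmax learner
    have hmin : ∀ x, 1 - postAInf π p q f x (ystar x) = m x := by
      intro x
      have h0' := hystar x y0
      have h1' := hystar x y1
      have hs := hsum2 x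
      rcases hmem2 (ystar x) with h|h <;> rw [h] at h0' h1' ⊢ <;> rw [hm] <;> dsimp only
      · rw [min_eq_right (by linarith)]; linarith
      · rw [min_eq_left (by linarith)]; linarith
    set Ahat : InfLearner X Y := fun _ _ _ g => if g = (fun x => ystar x) then 1 else 0
      with hAhat
    have hAhatL : IsInfLearner Ahat := by
      intro p' q' fp'
      constructor
      · intro g; rw [hAhat]; dsimp only; split <;> norm_num
      · rw [hAhat]; dsimp only
        rw [Finset.sum_ite_eq' univ (fun x => ystar x) (fun _ => (1:ℝ))]
        exact if_pos (mem_univ _)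
    have hAhatRisk : swRiskInf π Ahat p q f = M := by
      rw [show swRiskInf π Ahat p q f = _ from keyId (Ahat p q (restrictSupp p f))]
      apply Finset.sum_congr rfl; intro x _
      congr 1
      have hsplit : ∀ g : X → Y, Ahat p q (restrictSupp p f) g *
          (1 - postAInf π p q f x (g x))
          = if g = (fun x => ystar x) then (1 - postAInf π p q f x (g x)) else 0 := by
        intro g
        rw [hAhat]; dsimp only
        split <;> simp
      rw [Finset.sum_congr rfl (fun g _ => hsplit g),
        Finset.sum_ite_eq' univ (fun x => ystar x)
          (fun g => 1 - postAInf π p q f x (g x)), if_pos (mem_univ _)]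
      exact hmin x
    -- e* facts
    have hSne : Set.Nonempty {r : ℝ | ∃ B : InfLearner X Y,
        IsInfLearner B ∧ swRiskInf π B p q f = r} := ⟨_, A, hA, rfl⟩
    have hSbdd : BddBelow {r : ℝ | ∃ B : InfLearner X Y,
        IsInfLearner B ∧ swRiskInf π B p q f = r} := by
      refine ⟨0, ?_⟩
      rintro r ⟨B, hB, rfl⟩
      exact hrisknn B hB
    have heStar_ge : M ≤ eStarInf π p q f := by
      apply le_csInf hSne
      rintro r ⟨B, hB, rfl⟩
      exact hMle B hB
    have heStar_le : eStarInf π p q f ≤ M := by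
      apply csInf_le hSbdd
      exact ⟨Ahat, hAhatL, hAhatRisk⟩
    have he0 : 0 ≤ eStarInf π p q f :=
      le_csInf hSne (by rintro r ⟨B, hB, rfl⟩; exact hrisknn B hB)
    -- U² ≤ 4 (M - M²) via Cauchy–Schwarz
    have hCS1 : (PTLUInf π p q f) ^ 2
        ≤ ∑ x, q x * (entropy2 (fun y => postAInf π p q f x y)) ^ 2 := by
      have := Finset.sum_mul_sq_le_sq_mul_sq univ (fun x => Real.sqrt (q x))
        (fun x => Real.sqrt (q x) * entropy2 (fun y => postAInf π p q f x y))
      have e1 : ∀ x : X, Real.sqrt (q x) * (Real.sqrt (q x) *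
          entropy2 (fun y => postAInf π p q f x y))
          = q x * entropy2 (fun y => postAInf π p q f x y) := by
        intro x
        rw [← mul_assoc, Real.mul_self_sqrt (hq0 x)]
      have e2 : ∀ x : X, Real.sqrt (q x) ^ 2 = q x := fun x => Real.sq_sqrt (hq0 x)
      have e3 : ∀ x : X, (Real.sqrt (q x) * entropy2 (fun y => postAInf π p q f x y)) ^ 2
          = q x * (entropy2 (fun y => postAInf π p q f x y)) ^ 2 := by
        intro x; rw [mul_pow, e2]
      rw [Finset.sum_congr rfl (fun x _ => e1 x), Finset.sum_congr rfl (fun x _ => e2 x),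
        Finset.sum_congr rfl (fun x _ => e3 x), hq1, one_mul] at this
      exact this
    have hCS2 : M ^ 2 ≤ ∑ x, q x * m x ^ 2 := by
      have := Finset.sum_mul_sq_le_sq_mul_sq univ (fun x => Real.sqrt (q x))
        (fun x => Real.sqrt (q x) * m x)
      have e1 : ∀ x : X, Real.sqrt (q x) * (Real.sqrt (q x) * m x) = q x * m x := by
        intro x
        rw [← mul_assoc, Real.mul_self_sqrt (hq0 x)]
      have e3 : ∀ x : X, (Real.sqrt (q x) * m x) ^ 2 = q x * m x ^ 2 := by
        intro x; rw [mul_pow, Real.sq_sqrt (hq0 x)]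
      rw [Finset.sum_congr rfl (fun x _ => e1 x),
        Finset.sum_congr rfl (fun x _ => Real.sq_sqrt (hq0 x)),
        Finset.sum_congr rfl (fun x _ => e3 x), hq1, one_mul] at this
      exact this
    have hU2 : (PTLUInf π p q f) ^ 2 ≤ 4 * (M - M ^ 2) := by
      calc (PTLUInf π p q f) ^ 2
          ≤ ∑ x, q x * (entropy2 (fun y => postAInf π p q f x y)) ^ 2 := hCS1
        _ ≤ ∑ x, q x * (4 * (m x - m x ^ 2)) := by
            apply Finset.sum_le_sum; intro x _
            exact mul_le_mul_of_nonneg_left (hEntSq x) (hq0 x)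
        _ = 4 * (M - ∑ x, q x * m x ^ 2) := by
            rw [hM, ← Finset.sum_sub_distrib, Finset.mul_sum]
            exact Finset.sum_congr rfl (fun x _ => by ring)
        _ ≤ 4 * (M - M ^ 2) := by linarith [hCS2]
    have hswM : M ≤ swRiskInf π A p q f := hMle A hA
    have hee : eStarInf π p q f ^ 2 ≤ M ^ 2 := by nlinarith [he0, heStar_le]
    nlinarith [hU2, hswM, hee]

end
end
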